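/- (Factorial Schur Gustafson–Milne identity, the β = 0 case.) Let λ = (λ_1 ≥ ⋯ ≥ λ_k ≥ 0) be a partition with k ≤ n parts satisfying λ_k ≥ n − k. Then s_{(λ_1−n+k, …, λ_k−n+k)}(x_1,…,x_n|y) = Σ_{S ∈ binom([n],k)} s_λ(x_S|y) / (∏_{i∈S}∏_{j∈S̄}(x_i − x_j)), where the left-hand side is the factorial Schur polynomial in n variables indexed by the partition (λ_1−n+k, …, λ_k−n+k) padded with zeros to length n, and s_λ(x_S|y) is the factorial Schur polynomial in the k variables x_S. -/

import Mathlib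

/-!
Expand the numerator determinant of the left-hand side by Laplace along its first `k` columns,
writing `n = k + m`. For a row set `S`, the entries of the top block are
`(x_i|y)^{λ_j - m + (n - 1 - j)} = (x_i|y)^{λ_j + (k - 1 - j)}`, so its determinant is the
numerator of `s_λ(x_S|y)`; the bottom block has entries `(x_i|y)^{m - 1 - j}` and, factorial
powers being monic of the right degree, is the Vandermonde product of `x_{S̄}`. Reordering `x` as
`(x_S, x_{S̄})` multiplies its Vandermonde product by the Laplace sign and factors it as
`V(x_S) V(x_{S̄}) ∏_{i∈S, j∈S̄} (x_i - x_j)`, which leaves exactly the summand.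
-/

/-- `(x|y)^j = (x + y_1)(x + y_2)⋯(x + y_j)`, with `(x|y)^0 = 1` (`y t` is `y_{t+1}`). -/
def facpow {F : Type*} [Field F] (y : ℕ → F) (x : F) (j : ℕ) : F :=
  ∏ t ∈ Finset.range j, (x + y t)

/-- The factorial Schur polynomial, given by the determinantal formula
`s_λ(x|y) = det((x_i|y)^{λ_j+n−j})_{1≤i,j≤n} / ∏_{i<j}(x_i − x_j)`. -/
noncomputable def facSchur {F : Type*} [Field F] (y : ℕ → F) {n : ℕ}
    (lam : Fin n → ℕ) (x : Fin n → F) : F :=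
  (Matrix.of fun i j : Fin n => facpow y (x i) (lam j + (n - 1 - (j : ℕ)))).det
    / ∏ i : Fin n, ∏ j ∈ Finset.Ioi i, (x i - x j)

open Finset Matrix Equiv

section Vandermonde

variable {R : Type*} [CommRing R] {N : ℕ}

-- The denominator of `facSchur`; mind that `det (vandermonde v) = ∏ i < j, (v j - v i)`.
def vandermondeProd (v : Fin N → R) : R := ∏ i, ∏ j ∈ Ioi i, (v i - v j)

lemma det_projVandermonde_one (v : Fin N → R) :
    (projVandermonde 1 v).det = vandermondeProd v := by
  simp [det_projVandermonde, vandermondeProd]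

lemma vandermondeProd_comp_perm (v : Fin N → R) (σ : Perm (Fin N)) :
    vandermondeProd (v ∘ σ) = Perm.sign σ * vandermondeProd v := by
  rw [← det_projVandermonde_one, ← det_projVandermonde_one, ← det_permute]
  rfl

lemma vandermondeProd_ne_zero [IsDomain R] {v : Fin N → R} (hv : Function.Injective v) :
    vandermondeProd v ≠ 0 :=
  prod_ne_zero_iff.2 fun _ _ => prod_ne_zero_iff.2 fun _ hj =>
    sub_ne_zero.2 <| hv.ne (mem_Ioi.1 hj).ne

lemma prod_Ioi_eq_prod_ite {M : Type*} [CommMonoid M] (f : Fin N → M) (i : Fin N) :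
    ∏ j ∈ Ioi i, f j = ∏ j, if i < j then f j else 1 := by
  rw [← prod_filter]; congr 1; ext; simp

lemma vandermondeProd_append {k m : ℕ} (u : Fin k → R) (w : Fin m → R) :
    vandermondeProd (Fin.append u w) =
      vandermondeProd u * vandermondeProd w * ∏ a, ∏ b, (u a - w b) := by
  have hlt (a : Fin k) (b : Fin m) : (a : ℕ) < k + b := by omega
  have hnlt (a : Fin k) (b : Fin m) : ¬ k + (b : ℕ) < a := by omega
  simp only [vandermondeProd, prod_Ioi_eq_prod_ite, Fin.prod_univ_add, Fin.append_left,
    Fin.append_right, Fin.lt_def, Fin.val_castAdd, Fin.val_natAdd]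
  simp only [← Fin.lt_def, add_lt_add_iff_left, hlt, hnlt, if_true, if_false, prod_const_one,
    prod_mul_distrib]
  ring

end Vandermonde

section FactorialPowers

variable {F : Type*} [Field F] {N : ℕ}

open Polynomial in
lemma det_facpow_eq_det_vandermonde (y : ℕ → F) (z : Fin N → F) :
    (of fun i j : Fin N => facpow y (z i) j).det = (vandermonde z).det := by
  have hmonic (j : ℕ) : ∀ t ∈ range j, (X + C (y t)).Monic := fun t _ => monic_X_add_C (y t)
  symm
  convert det_eval_matrixOfPolynomials_eq_det_vandermonde z
    (fun j => ∏ t ∈ range j, (X + C (y t)))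
    (fun j => by simp [natDegree_prod_of_monic _ _ (hmonic j)])
    (fun j => monic_prod_of_monic _ _ (hmonic j)) using 3
  simp [facpow, eval_prod]

lemma det_facpow_sub_eq_vandermondeProd (y : ℕ → F) (z : Fin N → F) :
    (of fun i j : Fin N => facpow y (z i) (N - 1 - j)).det = vandermondeProd z := by
  rw [← det_submatrix_equiv_self Fin.revPerm, ← det_projVandermonde_one,
    ← det_submatrix_equiv_self Fin.revPerm (projVandermonde 1 z)]
  convert det_facpow_eq_det_vandermonde y (z ∘ Fin.rev) using 2
  · ext i j
    simp only [submatrix_apply, of_apply, Fin.revPerm_apply, Function.comp_apply, Fin.val_rev]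
    congr 1; omega
  · ext i j
    simp [projVandermonde_apply, vandermonde_apply]

end FactorialPowers

section Laplace

variable {R : Type*} [CommRing R] {k m : ℕ}

lemma card_compl_of_card_eq {S : Finset (Fin (k + m))} (hS : #S = k) : #Sᶜ = m := by
  rw [card_compl, hS, Fintype.card_fin, Nat.add_sub_cancel_left]

noncomputable def shufflePerm (S : {S : Finset (Fin (k + m)) // #S = k}) : Perm (Fin (k + m)) :=
  finSumFinEquiv.symm.trans (finSumEquivOfFinset S.2 (card_compl_of_card_eq S.2))

@[simp] lemma shufflePerm_castAdd (S : {S : Finset (Fin (k + m)) // #S = k}) (a : Fin k) :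
    shufflePerm S (Fin.castAdd m a) = S.1.orderEmbOfFin S.2 a := by
  simp [shufflePerm]

@[simp] lemma shufflePerm_natAdd (S : {S : Finset (Fin (k + m)) // #S = k}) (b : Fin m) :
    shufflePerm S (Fin.natAdd k b) = S.1ᶜ.orderEmbOfFin (card_compl_of_card_eq S.2) b := by
  simp [shufflePerm]

noncomputable def shuffleDecomp
    (p : {S : Finset (Fin (k + m)) // #S = k} × Perm (Fin k) × Perm (Fin m)) :
    Perm (Fin (k + m)) :=
  shufflePerm p.1 * finSumFinEquiv.permCongr (sumCongr p.2.1 p.2.2)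

@[simp] lemma shuffleDecomp_castAdd
    (p : {S : Finset (Fin (k + m)) // #S = k} × Perm (Fin k) × Perm (Fin m)) (a : Fin k) :
    shuffleDecomp p (Fin.castAdd m a) = p.1.1.orderEmbOfFin p.1.2 (p.2.1 a) := by
  simp [shuffleDecomp, permCongr_apply]

@[simp] lemma shuffleDecomp_natAdd
    (p : {S : Finset (Fin (k + m)) // #S = k} × Perm (Fin k) × Perm (Fin m)) (b : Fin m) :
    shuffleDecomp p (Fin.natAdd k b) =
      p.1.1ᶜ.orderEmbOfFin (card_compl_of_card_eq p.1.2) (p.2.2 b) := by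
  simp [shuffleDecomp, permCongr_apply]

lemma range_shuffleDecomp_castAdd
    (p : {S : Finset (Fin (k + m)) // #S = k} × Perm (Fin k) × Perm (Fin m)) :
    Set.range (fun a => shuffleDecomp p (Fin.castAdd m a)) = p.1.1 := by
  simp only [shuffleDecomp_castAdd]
  exact (p.2.1.surjective.range_comp _).trans (range_orderEmbOfFin _ _)

lemma shuffleDecomp_bijective : Function.Bijective (shuffleDecomp (k := k) (m := m)) := by
  refine (Fintype.bijective_iff_injective_and_card _).2 ⟨?_, ?_⟩
  · rintro ⟨S, τ, υ⟩ ⟨S', τ', υ'⟩ h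
    obtain rfl : S = S' := Subtype.ext <| coe_injective <| by
      rw [← range_shuffleDecomp_castAdd (S, τ, υ), ← range_shuffleDecomp_castAdd (S', τ', υ'),
        h]
    have := Perm.sumCongrHom_injective <| finSumFinEquiv.permCongr.injective <| mul_left_cancel h
    simp_all
  · simpa [Fintype.card_finset_len, Fintype.card_perm, ← mul_assoc] using
      Nat.choose_mul_factorial_mul_factorial (Nat.le_add_right k m)

lemma sign_shuffleDecomp
    (p : {S : Finset (Fin (k + m)) // #S = k} × Perm (Fin k) × Perm (Fin m)) :
    Perm.sign (shuffleDecomp p) =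
      Perm.sign (shufflePerm p.1) * Perm.sign p.2.1 * Perm.sign p.2.2 := by
  rw [shuffleDecomp, map_mul, Perm.sign_permCongr, Perm.sign_sumCongr, mul_assoc]

-- Laplace expansion along the first `k` columns.
theorem det_eq_sum_det_castAdd_mul_det_natAdd (M : Matrix (Fin (k + m)) (Fin (k + m)) R) :
    M.det = ∑ S : {S : Finset (Fin (k + m)) // #S = k}, Perm.sign (shufflePerm S) *
      (M.submatrix (S.1.orderEmbOfFin S.2) (Fin.castAdd m)).det *
      (M.submatrix (S.1ᶜ.orderEmbOfFin (card_compl_of_card_eq S.2)) (Fin.natAdd k)).det := by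
  rw [det_apply', ← (Equiv.ofBijective _ shuffleDecomp_bijective).sum_comp,
    Fintype.sum_prod_type]
  refine sum_congr rfl fun S _ => ?_
  rw [Fintype.sum_prod_type, det_apply', det_apply', mul_assoc, sum_mul_sum, mul_sum]
  refine sum_congr rfl fun τ _ => ?_
  rw [mul_sum]
  refine sum_congr rfl fun υ _ => ?_
  simp only [ofBijective_apply, sign_shuffleDecomp, Fin.prod_univ_add, shuffleDecomp_castAdd,
    shuffleDecomp_natAdd, submatrix_apply]
  push_cast
  ring

end Laplace

lemma prod_finset_eq_prod_orderEmbOfFin {ι M : Type*} [LinearOrder ι] [CommMonoid M] {k : ℕ}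
    (S : Finset ι) (hS : #S = k) (f : ι → M) :
    ∏ i ∈ S, f i = ∏ a, f (S.orderEmbOfFin hS a) := by
  conv_lhs => rw [← map_orderEmbOfFin_univ S hS]
  exact prod_map _ _ _

lemma sign_shufflePerm_mul_vandermondeProd {R : Type*} [CommRing R] {k m : ℕ}
    (x : Fin (k + m) → R) (S : {S : Finset (Fin (k + m)) // #S = k}) :
    Perm.sign (shufflePerm S) * vandermondeProd x =
      vandermondeProd (fun i => x (S.1.orderEmbOfFin S.2 i)) *
      vandermondeProd (fun i => x (S.1ᶜ.orderEmbOfFin (card_compl_of_card_eq S.2) i)) *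
      ∏ i ∈ S.1, ∏ j ∈ S.1ᶜ, (x i - x j) := by
  have happend : x ∘ shufflePerm S =
      Fin.append (fun i => x (S.1.orderEmbOfFin S.2 i))
        (fun i => x (S.1ᶜ.orderEmbOfFin (card_compl_of_card_eq S.2) i)) := by
    ext i
    induction i using Fin.addCases <;> simp
  rw [← vandermondeProd_comp_perm, happend, vandermondeProd_append,
    prod_finset_eq_prod_orderEmbOfFin S.1 S.2]
  simp only [prod_finset_eq_prod_orderEmbOfFin S.1ᶜ (card_compl_of_card_eq S.2)]

lemma facSchur_mul_vandermondeProd {F : Type*} [Field F] {N : ℕ} (y : ℕ → F)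
    (lam : Fin N → ℕ) {x : Fin N → F} (hx : Function.Injective x) :
    facSchur y lam x * vandermondeProd x =
      (of fun i j : Fin N => facpow y (x i) (lam j + (N - 1 - j))).det :=
  div_mul_cancel₀ _ (vandermondeProd_ne_zero hx)

section Blocks

variable {F : Type*} [Field F] (y : ℕ → F) {k m : ℕ} {x : Fin (k + m) → F}
  {lam : Fin k → ℕ}

lemma det_submatrix_castAdd_facpow (hx : Function.Injective x) (hm : ∀ j, m ≤ lam j)
    {r : Fin k → Fin (k + m)} (hr : Function.Injective r) :
    ((of fun i j : Fin (k + m) => facpow y (x i)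
      ((if h : (j : ℕ) < k then lam ⟨j, h⟩ - m else 0) + (k + m - 1 - j))).submatrix
        r (Fin.castAdd m)).det =
      facSchur y lam (fun i => x (r i)) * vandermondeProd (fun i => x (r i)) := by
  rw [facSchur_mul_vandermondeProd y lam (x := fun i => x (r i)) (hx.comp hr)]
  congr 1
  ext i j
  simp only [submatrix_apply, of_apply, Fin.val_castAdd, dif_pos j.2, Fin.eta]
  have := hm j
  congr 1
  omega

lemma det_submatrix_natAdd_facpow (r : Fin m → Fin (k + m)) :
    ((of fun i j : Fin (k + m) => facpow y (x i)
      ((if h : (j : ℕ) < k then lam ⟨j, h⟩ - m else 0) + (k + m - 1 - j))).submatrix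
        r (Fin.natAdd k)).det = vandermondeProd (fun i => x (r i)) := by
  rw [← det_facpow_sub_eq_vandermondeProd y]
  congr 1
  ext i j
  simp only [submatrix_apply, of_apply, Fin.val_natAdd,
    dif_neg (Nat.not_lt.2 (Nat.le_add_right k j))]
  congr 1
  omega

lemma sign_mul_det_mul_det_div_vandermondeProd (hx : Function.Injective x)
    (hm : ∀ j, m ≤ lam j) (S : {S : Finset (Fin (k + m)) // #S = k}) :
    let M := of fun i j : Fin (k + m) => facpow y (x i)
      ((if h : (j : ℕ) < k then lam ⟨j, h⟩ - m else 0) + (k + m - 1 - j))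
    Perm.sign (shufflePerm S) * (M.submatrix (S.1.orderEmbOfFin S.2) (Fin.castAdd m)).det *
        (M.submatrix (S.1ᶜ.orderEmbOfFin (card_compl_of_card_eq S.2)) (Fin.natAdd k)).det /
        vandermondeProd x =
      facSchur y lam (fun i => x (S.1.orderEmbOfFin S.2 i)) /
        ∏ i ∈ S.1, ∏ j ∈ S.1ᶜ, (x i - x j) := by
  dsimp only
  have hV := sign_shufflePerm_mul_vandermondeProd x S
  have hP : ∏ i ∈ S.1, ∏ j ∈ S.1ᶜ, (x i - x j) ≠ 0 :=
    prod_ne_zero_iff.2 fun i hi => prod_ne_zero_iff.2 fun j hj =>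
      sub_ne_zero.2 <| hx.ne <| ne_of_mem_of_not_mem hi (mem_compl.1 hj)
  rw [det_submatrix_castAdd_facpow y hx hm (S.1.orderEmbOfFin S.2).injective,
    det_submatrix_natAdd_facpow, div_eq_div_iff (vandermondeProd_ne_zero hx) hP]
  set s : F := ((Perm.sign (shufflePerm S) : ℤ) : F)
  set f := facSchur y lam (fun i => x (S.1.orderEmbOfFin S.2 i))
  have hs : s * s = 1 := by simp [s, ← Int.cast_mul, ← Units.val_mul]
  linear_combination (-(s * f)) * hV + (f * vandermondeProd x) * hs

end Blocks

/-- Gustafson–Milne identity for factorial Schur polynomials (the `β = 0` case):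
`s_{(λ_1−n+k,…,λ_k−n+k)}(x|y) = Σ_{S ∈ binom([n],k)} s_λ(x_S|y) / ∏_{i∈S}∏_{j∈S̄}(x_i−x_j)`. -/
theorem stmt15 {F : Type*} [Field F] (y : ℕ → F) (n k : ℕ) (hkn : k ≤ n)
    (x : Fin n → F) (hx : Function.Injective x)
    (lam : Fin k → ℕ) (hlam : Antitone lam) (hk : 0 < k)
    (hmin : n - k ≤ lam ⟨k - 1, Nat.sub_lt hk Nat.one_pos⟩) :
    facSchur y (fun i : Fin n => if h : (i : ℕ) < k then lam ⟨i, h⟩ - (n - k) else 0) x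
      = ∑ S : {S : Finset (Fin n) // S.card = k},
          facSchur y lam (fun i : Fin k => x ((S.1.orderIsoOfFin S.2 i : Fin n)))
            / ∏ i ∈ S.1, ∏ j ∈ S.1ᶜ, (x i - x j) := by
  obtain ⟨m, rfl⟩ := Nat.exists_eq_add_of_le hkn
  rw [Nat.add_sub_cancel_left] at hmin ⊢
  have hm (j : Fin k) : m ≤ lam j := hmin.trans <| hlam <| Fin.le_def.2 (Nat.le_sub_one_of_lt j.2)
  rw [facSchur, ← vandermondeProd, det_eq_sum_det_castAdd_mul_det_natAdd, sum_div]
  simp only [coe_orderIsoOfFin_apply]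
  exact sum_congr rfl fun S _ => sign_mul_det_mul_det_div_vandermondeProd y hx hm S
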